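/- arXiv:1106.5176 — 2 statements merged into one kernel-verified Lean document; each statement's English description precedes it below -/
import Mathlib

section
/- Let R₂ = 𝔽₂[X,Y]/(Y² + X·Y + X⁵ + X³ + X² + X), and write x, y for the images of X, Y in R₂. Then the square of the ideal (x, y) of R₂ equals the principal ideal (x). -/
noncomputable section

open Polynomial

/-- The polynomial `Y² + X·Y + (X⁵ + X³ + X² + X)` as an element of `𝔽₂[X][Y]`
(the outer variable is `Y`, the inner variable is `X`). -/
def f2 : Polynomial (Polynomial (ZMod 2)) :=
  X ^ 2 + C X * X + C (X ^ 5 + X ^ 3 + X ^ 2 + X)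

/-- The ring `R₂ = 𝔽₂[X,Y]/(Y² + X·Y + X⁵ + X³ + X² + X)`. -/
def R2 : Type := Polynomial (Polynomial (ZMod 2)) ⧸ Ideal.span {f2}

instance : CommRing R2 := Ideal.Quotient.commRing _

/-- The quotient map `𝔽₂[X][Y] → R₂`. -/
def toR2 : Polynomial (Polynomial (ZMod 2)) →+* R2 :=
  Ideal.Quotient.mk (Ideal.span {f2})

/-- The image `x` of `X` in `R₂`. -/
def x2 : R2 := toR2 (C X)

/-- The image `y` of `Y` in `R₂`. -/
def y2 : R2 := toR2 X

/-!
With `v = x³ + x + 1` the defining equation of `R₂` reads `y² + x·y + x·(1 + x·v) = 0`, whose only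
linear term is `x` (the curve is tangent to `x = 0` at the origin). Hence `y² = -x·(y + 1 + x·v)`
lies in `(x)`, and solving for the linear term, `x = -(y² + x·y + x²·v)` lies in `(x, y)²`. Since
`(x, y)²` is generated by `x², x·y, y²`, the two memberships give `(x, y)² = (x)`.
-/

namespace Ideal

variable {R : Type*} [CommRing R]

theorem span_pair_sq_eq_span_singleton {x y : R} (hy : y ^ 2 ∈ span {x})
    (hx : x ∈ span {x, y} ^ 2) : span {x, y} ^ 2 = span {x} := by
  refine le_antisymm ?_ ((span_singleton_le_iff_mem _).mpr hx)
  rw [sq, span_pair_mul_span_pair, span_le]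
  have hxy : x * y ∈ span {x} := mul_mem_right _ _ (mem_span_singleton_self x)
  rintro z (rfl | rfl | rfl | rfl)
  · exact mul_mem_right _ _ (mem_span_singleton_self x)
  · exact hxy
  · exact mul_comm x y ▸ hxy
  · exact sq y ▸ hy

theorem span_pair_sq_eq_span_singleton_of_sq_add_mul_add_mul_eq_zero {x y v : R}
    (h : y ^ 2 + x * y + x * (1 + x * v) = 0) : span {x, y} ^ 2 = span {x} := by
  have hx : x ∈ span {x, y} := subset_span (by simp)
  have hy : y ∈ span {x, y} := subset_span (by simp)
  apply span_pair_sq_eq_span_singleton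
  · exact mem_span_singleton'.mpr ⟨-(y + 1 + x * v), by linear_combination -h⟩
  · rw [sq]
    convert sub_mem (sub_mem (neg_mem (mul_mem_mul hy hy)) (mul_mem_mul hx hy))
      (mul_mem_right v _ (mul_mem_mul hx hx)) using 1
    linear_combination h

end Ideal

theorem y2_sq_add_x2_mul_y2_add_x2_mul_eq_zero :
    y2 ^ 2 + x2 * y2 + x2 * (1 + x2 * (x2 ^ 3 + x2 + 1)) = 0 := by
  have hf2 : y2 ^ 2 + x2 * y2 + (x2 ^ 5 + x2 ^ 3 + x2 ^ 2 + x2) = toR2 f2 := by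
    simp only [x2, y2, f2, map_add, map_mul, map_pow]
  rw [show toR2 f2 = 0 from Ideal.Quotient.eq_zero_iff_mem.mpr (Ideal.subset_span rfl)] at hf2
  linear_combination hf2

/-- In `R₂` the square of the ideal `(x, y)` is the principal ideal `(x)`. -/
theorem stmt_5 : (Ideal.span {x2, y2}) ^ 2 = Ideal.span {x2} :=
  Ideal.span_pair_sq_eq_span_singleton_of_sq_add_mul_add_mul_eq_zero
    y2_sq_add_x2_mul_y2_add_x2_mul_eq_zero
end
end

section
/- Let R₂ = 𝔽₂[X,Y]/(Y² + X·Y + X⁵ + X³ + X² + X), and write x, y for the images of X, Y in R₂. Then the ideal (x, y) of R₂ is not a principal ideal. -/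
noncomputable section

open Polynomial

/-!
If `(x, y) = (g)`, take norms down to `𝔽₂[x]`, where `N(a + b y) = a² + a b x + b² q(x)` with
`q = x⁵ + x³ + x² + x`. Then `N g` divides `N x = x²` and `N y = q`, and `x ∣ N g` because `g`
vanishes at `(0, 0)`; as `x² ∤ q`, this forces `deg N g = 1`. But `deg N g` is either `2 deg a`
(even) or `2 deg b + 5`, since the middle term `a b x` never dominates.
-/

namespace Polynomial

variable {R : Type*} [CommRing R] [IsDomain R]

theorem natDegree_eq_one_of_dvd_X_sq {n : R[X]} (h : n ∣ X ^ 2) (hX : X ∣ n)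
    (hX2 : ¬X ^ 2 ∣ n) : n.natDegree = 1 := by
  obtain ⟨i, hi, hn⟩ := (dvd_prime_pow prime_X 2).mp h
  interval_cases i
  · exact absurd (isUnit_of_dvd_unit hX (hn.isUnit_iff.mpr (by simp))) not_isUnit_X
  · simpa using natDegree_eq_of_degree_eq (degree_eq_degree_of_associated hn)
  · exact absurd hn.symm.dvd hX2

theorem natDegree_sq_add_mul_mul_X_add_sq_mul_ne_one {q : R[X]} (hq : Odd q.natDegree)
    (hq3 : 3 ≤ q.natDegree) (a b : R[X]) :
    (a ^ 2 + a * b * X + b ^ 2 * q).natDegree ≠ 1 := by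
  rcases eq_or_ne b 0 with rfl | hb
  · simp only [mul_zero, zero_mul, ne_eq, OfNat.ofNat_ne_zero, not_false_eq_true, zero_pow,
      add_zero, natDegree_pow]
    omega
  have hq0 : q ≠ 0 := by rintro rfl; simp at hq3
  have hmid : (a * b * X).natDegree ≤ a.natDegree + b.natDegree + 1 :=
    natDegree_mul_le.trans (by grw [natDegree_mul_le, natDegree_X])
  have hlast : (b ^ 2 * q).natDegree = 2 * b.natDegree + q.natDegree := by
    rw [natDegree_mul (pow_ne_zero 2 hb) hq0, natDegree_pow]
  have hfirst : (a ^ 2).natDegree = 2 * a.natDegree := natDegree_pow a 2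
  obtain ⟨k, hk⟩ := hq
  rcases lt_or_gt_of_ne (show 2 * a.natDegree ≠ 2 * b.natDegree + q.natDegree by omega)
    with hlt | hgt
  · rw [natDegree_add_eq_right_of_natDegree_lt ((natDegree_add_le _ _).trans_lt (by omega))]
    omega
  · rw [add_assoc, natDegree_add_eq_left_of_natDegree_lt
      ((natDegree_add_le _ _).trans_lt (by omega))]
    omega

end Polynomial

namespace R2

def quintic : (ZMod 2)[X] := X ^ 5 + X ^ 3 + X ^ 2 + X

theorem quintic_natDegree : quintic.natDegree = 5 := by unfold quintic; compute_degree!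

theorem f2_eq : f2 = X ^ 2 + C X * X + C quintic := rfl

theorem f2_monic : f2.Monic := by unfold f2; monicity!

theorem f2_natDegree : f2.natDegree = 2 := by unfold f2; compute_degree!

def ofPoly : (ZMod 2)[X] →+* R2 := toR2.comp C

theorem toR2_C (p : (ZMod 2)[X]) : toR2 (C p) = ofPoly p := rfl

theorem toR2_X : toR2 X = y2 := rfl

theorem ofPoly_X : ofPoly X = x2 := rfl

theorem toR2_surjective : Function.Surjective toR2 := Ideal.Quotient.mk_surjective

theorem toR2_f2 : toR2 f2 = 0 :=
  Ideal.Quotient.eq_zero_iff_mem.mpr (Ideal.mem_span_singleton_self _)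

theorem y2_sq_add : y2 ^ 2 + x2 * y2 + ofPoly quintic = 0 := by
  simpa [f2_eq, toR2_C, toR2_X, ofPoly_X] using toR2_f2

theorem two_eq_zero : (2 : R2) = 0 := by
  rw [← one_add_one_eq_two, ← map_one toR2, ← map_add, one_add_one_eq_two,
    CharTwo.two_eq_zero (R := (ZMod 2)[X][X]), map_zero]

theorem ofPoly_injective : Function.Injective ofPoly := by
  refine (injective_iff_map_eq_zero _).mpr fun p hp => ?_
  have hdvd : f2 ∣ C p := Ideal.mem_span_singleton.mp (Ideal.Quotient.eq_zero_iff_mem.mp hp)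
  by_contra hp0
  have := natDegree_le_of_dvd hdvd (C_ne_zero.mpr hp0)
  rw [f2_natDegree, natDegree_C] at this
  omega

theorem exists_eq_ofPoly_add_ofPoly_mul (g : R2) : ∃ a b, g = ofPoly a + ofPoly b * y2 := by
  obtain ⟨G, rfl⟩ := toR2_surjective g
  have hr : (G %ₘ f2).natDegree ≤ 1 := by
    have := natDegree_modByMonic_lt G f2_monic (by rintro h; simpa [h] using f2_natDegree)
    rw [f2_natDegree] at this
    omega
  refine ⟨(G %ₘ f2).coeff 0, (G %ₘ f2).coeff 1, ?_⟩
  calc toR2 G = toR2 (G %ₘ f2) :=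
        Ideal.Quotient.eq.mpr (Ideal.mem_span_singleton.mpr
          ⟨G /ₘ f2, sub_eq_iff_eq_add'.mpr (modByMonic_add_div G f2).symm⟩)
    _ = _ := by
      conv_lhs => rw [eq_X_add_C_of_natDegree_le_one hr]
      simp only [map_add, map_mul, toR2_C, toR2_X]
      ring

/-- The Galois conjugation `y ↦ y + x`: in characteristic 2 it swaps the two roots of
`Y² + xY + q(x)`, so `g * conj g` is the norm of `g` down to `𝔽₂[x]`. -/
def conj : R2 →+* R2 :=
  Ideal.Quotient.lift _ (toR2.comp (eval₂RingHom C (X + C X))) fun p hp => by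
    obtain ⟨k, rfl⟩ := Ideal.mem_span_singleton.mp hp
    simp only [RingHom.comp_apply, coe_eval₂RingHom, eval₂_X, eval₂_C, map_mul, map_add,
      map_pow, toR2_C, toR2_X, ofPoly_X, f2_eq]
    linear_combination
      toR2 (eval₂ C (X + C X) k) * (y2_sq_add + (x2 * y2 + x2 ^ 2) * two_eq_zero)

theorem conj_toR2 (p : (ZMod 2)[X][X]) : conj (toR2 p) = toR2 (eval₂ C (X + C X) p) :=
  Ideal.Quotient.lift_mk _ _ _

theorem conj_ofPoly (p : (ZMod 2)[X]) : conj (ofPoly p) = ofPoly p := by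
  rw [← toR2_C, conj_toR2, eval₂_C]

theorem conj_y2 : conj y2 = y2 + x2 := by
  rw [← toR2_X, conj_toR2, eval₂_X, map_add, toR2_C, ofPoly_X]

def normPoly (a b : (ZMod 2)[X]) : (ZMod 2)[X] := a ^ 2 + a * b * X + b ^ 2 * quintic

theorem mul_conj (a b : (ZMod 2)[X]) :
    (ofPoly a + ofPoly b * y2) * conj (ofPoly a + ofPoly b * y2) = ofPoly (normPoly a b) := by
  simp only [map_add, map_mul, conj_ofPoly, conj_y2, normPoly, map_pow, ofPoly_X]
  linear_combination ofPoly b ^ 2 * y2_sq_add +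
    (ofPoly a * ofPoly b * y2 - ofPoly b ^ 2 * ofPoly quintic) * two_eq_zero

theorem normPoly_dvd_normPoly {a b c d : (ZMod 2)[X]}
    (h : ofPoly a + ofPoly b * y2 ∣ ofPoly c + ofPoly d * y2) :
    normPoly a b ∣ normPoly c d := by
  obtain ⟨u, hu⟩ := h
  obtain ⟨e, f, rfl⟩ := exists_eq_ofPoly_add_ofPoly_mul u
  refine ⟨normPoly e f, ofPoly_injective ?_⟩
  rw [map_mul, ← mul_conj, ← mul_conj, ← mul_conj, hu, map_mul]
  ring

theorem normPoly_dvd_X_sq {a b : (ZMod 2)[X]} (h : ofPoly a + ofPoly b * y2 ∣ x2) :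
    normPoly a b ∣ X ^ 2 := by
  simpa [normPoly] using normPoly_dvd_normPoly (c := X) (d := 0) (by simpa [ofPoly_X] using h)

theorem normPoly_dvd_quintic {a b : (ZMod 2)[X]} (h : ofPoly a + ofPoly b * y2 ∣ y2) :
    normPoly a b ∣ quintic := by
  simpa [normPoly] using normPoly_dvd_normPoly (c := 0) (d := 1) (by simpa using h)

theorem natDegree_normPoly_ne_one (a b : (ZMod 2)[X]) : (normPoly a b).natDegree ≠ 1 :=
  natDegree_sq_add_mul_mul_X_add_sq_mul_ne_one
    (by rw [quintic_natDegree]; decide) (by rw [quintic_natDegree]; decide) a b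

theorem not_X_sq_dvd_quintic : ¬X ^ 2 ∣ quintic := by
  rw [X_pow_dvd_iff]
  intro h
  simpa [quintic, coeff_X, coeff_X_pow] using h 1 one_lt_two

def evalOrigin : R2 →+* ZMod 2 :=
  Ideal.Quotient.lift _ (eval₂RingHom (evalRingHom 0) 0) fun p hp => by
    obtain ⟨k, rfl⟩ := Ideal.mem_span_singleton.mp hp
    simp only [coe_eval₂RingHom, eval₂_mul, eval₂_add, eval₂_pow, eval₂_X, eval₂_C,
      coe_evalRingHom, f2_eq]
    simp [quintic]

theorem evalOrigin_toR2 (p : (ZMod 2)[X][X]) :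
    evalOrigin (toR2 p) = eval₂ (evalRingHom 0) 0 p :=
  Ideal.Quotient.lift_mk _ _ _

theorem evalOrigin_ofPoly (p : (ZMod 2)[X]) : evalOrigin (ofPoly p) = p.eval 0 := by
  rw [← toR2_C, evalOrigin_toR2, eval₂_C, coe_evalRingHom]

theorem evalOrigin_y2 : evalOrigin y2 = 0 := by
  rw [← toR2_X, evalOrigin_toR2, eval₂_X]

theorem X_dvd_normPoly {a b : (ZMod 2)[X]} (h : ofPoly a + ofPoly b * y2 ∈ Ideal.span {x2, y2}) :
    X ∣ normPoly a b := by
  have hker : Ideal.span {x2, y2} ≤ RingHom.ker evalOrigin := by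
    rw [Ideal.span_le]
    rintro z (rfl | rfl)
    · simp [← ofPoly_X, evalOrigin_ofPoly]
    · exact evalOrigin_y2
  have ha : a.eval 0 = 0 := by
    simpa [evalOrigin_ofPoly, evalOrigin_y2] using hker h
  rw [X_dvd_iff, coeff_zero_eq_eval_zero]
  simp [normPoly, quintic, ha]

end R2

/-- The ideal `(x, y)` of `R₂` is not principal. -/
theorem stmt_6 : ¬ (Ideal.span {x2, y2} : Ideal R2).IsPrincipal := by
  rintro ⟨g, hg⟩
  rw [Ideal.submodule_span_eq] at hg
  obtain ⟨a, b, rfl⟩ := R2.exists_eq_ofPoly_add_ofPoly_mul g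
  have hdvd : ∀ z ∈ ({x2, y2} : Set R2), R2.ofPoly a + R2.ofPoly b * y2 ∣ z := fun z hz =>
    Ideal.mem_span_singleton.mp (hg ▸ Ideal.subset_span hz)
  have hX2 := R2.normPoly_dvd_X_sq (hdvd x2 (by simp))
  have hq := R2.normPoly_dvd_quintic (hdvd y2 (by simp))
  have hX := R2.X_dvd_normPoly (hg ▸ Ideal.mem_span_singleton_self _)
  exact R2.natDegree_normPoly_ne_one a b
    (natDegree_eq_one_of_dvd_X_sq hX2 hX fun h => R2.not_X_sq_dvd_quintic (h.trans hq))
end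
end
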